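/- Let 𝔭 ∈ ℤ[x_1,…,x_n] be an integral polynomial and let q, q_1, …, q_n ≥ 1 be integers with least common multiple L = lcm(q, q_1, …, q_n). For a ∈ ℤ and 𝐚 = (a_1,…,a_n) ∈ ℤ^n define F(a,q,𝐚,𝐪) = L^{−n} ∑_{s ∈ {0,…,L−1}^n} e( 𝔭(s)·a/q + ∑_{i=1}^n s_i a_i/q_i ). If there exists an index i with q_i ∤ q, then F(a,q,𝐚,𝐪) = 0 for every a with gcd(a,q) = 1 and every 𝐚 with gcd(a_i, q_i) = 1 for all i. -/

import Mathlib

open scoped BigOperators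

/-!
Pick `i` with `q_i ∤ q` and translate the summation variable by `q` in the `i`-th coordinate.
Since `q ∣ L`, this does not change `𝔭(s)` modulo `q`, so the summand is multiplied by
`e(q a_i / q_i)`, which is not `1` because `gcd(a_i, q_i) = 1`. A sum invariant under
multiplication by a number other than `1` vanishes.
-/

noncomputable section

/-- `e(t) = e^{2πit}`. -/
def e2pi (t : ℝ) : ℂ := Complex.exp (2 * Real.pi * Complex.I * t)

lemma e2pi_add (x y : ℝ) : e2pi (x + y) = e2pi x * e2pi y := by
  simp [e2pi, ← Complex.exp_add, mul_add]

lemma e2pi_sum {ι : Type*} (s : Finset ι) (f : ι → ℝ) :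
    e2pi (∑ i ∈ s, f i) = ∏ i ∈ s, e2pi (f i) := by
  simp [e2pi, Finset.mul_sum, ← Complex.exp_sum]

lemma e2pi_intCast (m : ℤ) : e2pi m = 1 := by
  rw [e2pi, ← Complex.exp_int_mul_two_pi_mul_I m]
  push_cast
  ring_nf

lemma e2pi_add_intCast (x : ℝ) (m : ℤ) : e2pi (x + m) = e2pi x := by
  rw [e2pi_add, e2pi_intCast, mul_one]

lemma e2pi_intCast_div_congr {m m' : ℤ} {d : ℕ} (h : m ≡ m' [ZMOD d]) :
    e2pi (m / d) = e2pi (m' / d) := by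
  obtain rfl | hd := eq_or_ne d 0
  · simp
  obtain ⟨k, hk⟩ := h.dvd
  rw [← e2pi_add_intCast (m / d) k, show m' = m + d * k by linarith]
  push_cast
  field_simp

lemma e2pi_intCast_div_eq_one_iff {m : ℤ} {d : ℕ} (hd : d ≠ 0) :
    e2pi (m / d) = 1 ↔ (d : ℤ) ∣ m := by
  constructor
  · intro h
    obtain ⟨k, hk⟩ := Complex.exp_eq_one_iff.1 h
    have hk' : (m : ℂ) / d = k := by
      have h2pi : (2 * Real.pi * Complex.I : ℂ) ≠ 0 := by simp [Real.pi_ne_zero]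
      exact mul_left_cancel₀ h2pi (by push_cast at hk; linear_combination hk)
    refine ⟨k, ?_⟩
    rw [div_eq_iff (by exact_mod_cast hd)] at hk'
    exact_mod_cast hk'.trans (mul_comm _ _)
  · rintro ⟨k, rfl⟩
    simpa [hd] using e2pi_intCast k

lemma e2pi_natCast_mul_div_ne_one {m d : ℕ} {b : ℤ} (hd : d ≠ 0) (hb : Int.gcd b d = 1)
    (hm : ¬ d ∣ m) : e2pi (m * b / d) ≠ 1 := by
  have hcop : IsCoprime (d : ℤ) b :=
    Int.isCoprime_iff_gcd_eq_one.2 (by rw [Int.gcd_comm]; exact hb)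
  rw [(by push_cast; ring : (m : ℝ) * b / d = ((m * b : ℤ) : ℝ) / d), Ne,
    e2pi_intCast_div_eq_one_iff hd]
  exact fun hdvd => hm (Int.natCast_dvd_natCast.1 (hcop.dvd_of_dvd_mul_right hdvd))

theorem MvPolynomial.eval_intModEq {ι : Type*} (P : MvPolynomial ι ℤ) {d : ℕ} {u v : ι → ℤ}
    (h : ∀ j, u j ≡ v j [ZMOD d]) : eval u P ≡ eval v P [ZMOD d] := by
  rw [← ZMod.intCast_eq_intCast_iff, ← eq_intCast (Int.castRingHom (ZMod d)),
    ← eq_intCast (Int.castRingHom (ZMod d)), eval₂_comp, eval₂_comp]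
  congr 1
  funext j
  exact (ZMod.intCast_eq_intCast_iff _ _ _).2 (h j)

theorem Fintype.sum_eq_zero_of_map_add_eq_mul {G R : Type*} [AddGroup G] [Fintype G] [Ring R]
    [NoZeroDivisors R] {f : G → R} (g : G) {z : R} (hz : z ≠ 1) (h : ∀ s, f (s + g) = z * f s) :
    ∑ s, f s = 0 := by
  have hinv : ∑ s, f s = z * ∑ s, f s := calc
    ∑ s, f s = ∑ s, f (s + g) := (Equiv.sum_comp (Equiv.addRight g) f).symm
    _ = z * ∑ s, f s := by simp only [h, Finset.mul_sum]
  have hmul : (1 - z) * ∑ s, f s = 0 := by rw [sub_mul, one_mul, ← hinv, sub_self]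
  exact (mul_eq_zero.1 hmul).resolve_left (sub_ne_zero.2 hz.symm)

theorem Fin.val_add_ofNat_modEq {L : ℕ} [NeZero L] (x : Fin L) (m : ℕ) :
    ((x + Fin.ofNat L m : Fin L) : ℕ) ≡ x + m [MOD L] := by
  rw [Fin.val_add, Fin.val_ofNat]
  exact (Nat.mod_modEq _ _).trans ((Nat.mod_modEq m L).add_left _)

theorem Fin.val_add_single_ofNat_modEq {ι : Type*} [DecidableEq ι] {L : ℕ} [NeZero L]
    (s : ι → Fin L) (i : ι) (m : ℕ) (j : ι) :
    ((s + Pi.single i (Fin.ofNat L m) : ι → Fin L) j : ℕ)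
      ≡ ((fun j => (s j : ℕ)) + Pi.single i m : ι → ℕ) j [MOD L] := by
  by_cases hj : j = i
  · subst hj
    simpa using Fin.val_add_ofNat_modEq (s j) m
  · simp [hj, Nat.ModEq.refl]

section Phase

variable {ι : Type*} [Fintype ι] (P : MvPolynomial ι ℤ) (a : ℤ) (q : ℕ) (av : ι → ℤ)
  (qv : ι → ℕ)

def phase (u : ι → ℕ) : ℝ :=
  (MvPolynomial.eval (fun j => (u j : ℤ)) P : ℝ) * a / q + ∑ j, (u j : ℝ) * av j / qv j

variable {P a q av qv}

lemma e2pi_phase_congr {L : ℕ} (hq : q ∣ L) (hqv : ∀ j, qv j ∣ L) {u v : ι → ℕ}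
    (h : ∀ j, u j ≡ v j [MOD L]) :
    e2pi (phase P a q av qv u) = e2pi (phase P a q av qv v) := by
  have hpoly := (MvPolynomial.eval_intModEq P fun j =>
    Int.natCast_modEq_iff.2 ((h j).of_dvd hq)).mul_right a
  simp only [phase, e2pi_add, e2pi_sum]
  congr 1
  · exact_mod_cast e2pi_intCast_div_congr hpoly
  · refine Finset.prod_congr rfl fun j _ => ?_
    exact_mod_cast e2pi_intCast_div_congr
      ((Int.natCast_modEq_iff.2 ((h j).of_dvd (hqv j))).mul_right (av j))

lemma e2pi_phase_add_single [DecidableEq ι] (u : ι → ℕ) (i : ι) :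
    e2pi (phase P a q av qv (u + Pi.single i q : ι → ℕ))
      = e2pi (q * av i / qv i) * e2pi (phase P a q av qv u) := by
  have hmod : ∀ j, ((u + Pi.single i q : ι → ℕ) j : ℤ) ≡ u j [ZMOD q] := fun j => by
    by_cases hj : j = i
    · subst hj; simp
    · simp [hj]
  have hpoly :
      e2pi ((MvPolynomial.eval (fun j => ((u + Pi.single i q : ι → ℕ) j : ℤ)) P : ℝ) * a / q)
        = e2pi ((MvPolynomial.eval (fun j => (u j : ℤ)) P : ℝ) * a / q) := by
    exact_mod_cast e2pi_intCast_div_congr ((MvPolynomial.eval_intModEq P hmod).mul_right a)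
  have hlin : ∑ j, ((u + Pi.single i q : ι → ℕ) j : ℝ) * av j / qv j
      = q * av i / qv i + ∑ j, (u j : ℝ) * av j / qv j := by
    simp [add_mul, add_div, Finset.sum_add_distrib, Pi.single_apply, ite_div, add_comm]
  rw [phase, phase, hlin, e2pi_add, e2pi_add, e2pi_add, hpoly]
  ring

end Phase

theorem stmt6_general (n : ℕ) (P : MvPolynomial (Fin n) ℤ)
    (q : ℕ) (qv : Fin n → ℕ)
    (L : ℕ) (hL : L = Nat.lcm q (Finset.univ.lcm qv))
    (a : ℤ) (av : Fin n → ℤ)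
    (hndvd : ∃ i, ¬ (qv i ∣ q))
    (hav : ∀ i, Int.gcd (av i) ((qv i : ℤ)) = 1) :
    ((L : ℂ) ^ n)⁻¹ *
      ∑ s : Fin n → Fin L,
        e2pi (((MvPolynomial.eval (fun i => ((s i : ℕ) : ℤ)) P : ℤ) : ℝ) * (a : ℝ) / (q : ℝ)
          + ∑ i, ((s i : ℕ) : ℝ) * ((av i : ℤ) : ℝ) / ((qv i : ℕ) : ℝ)) = 0 := by
  obtain ⟨i, hi⟩ := hndvd
  obtain rfl | hL0 := eq_or_ne L 0
  · have : IsEmpty (Fin n → Fin 0) := ⟨fun s => (s i).elim0⟩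
    simp
  have : NeZero L := ⟨hL0⟩
  have hqL : q ∣ L := hL ▸ Nat.dvd_lcm_left _ _
  have hqvL : ∀ j, qv j ∣ L := fun j =>
    hL ▸ (Finset.dvd_lcm (Finset.mem_univ j)).trans (Nat.dvd_lcm_right _ _)
  have hz : e2pi (q * av i / qv i) ≠ 1 :=
    e2pi_natCast_mul_div_ne_one (ne_zero_of_dvd_ne_zero hL0 (hqvL i)) (hav i) hi
  refine mul_eq_zero_of_right _ (Fintype.sum_eq_zero_of_map_add_eq_mul
    (f := fun s : Fin n → Fin L => e2pi (phase P a q av qv fun j => s j))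
    (Pi.single i (Fin.ofNat L q)) hz fun s => ?_)
  rw [e2pi_phase_congr hqL hqvL (Fin.val_add_single_ofNat_modEq s i q), e2pi_phase_add_single]

theorem stmt6 (n : ℕ) (hn : 1 ≤ n) (P : MvPolynomial (Fin n) ℤ)
    (q : ℕ) (hq : 1 ≤ q) (qv : Fin n → ℕ) (hqv : ∀ i, 1 ≤ qv i)
    (L : ℕ) (hL : L = Nat.lcm q (Finset.univ.lcm qv))
    (a : ℤ) (av : Fin n → ℤ)
    (hndvd : ∃ i, ¬ (qv i ∣ q))
    (ha : Int.gcd a (q : ℤ) = 1)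
    (hav : ∀ i, Int.gcd (av i) ((qv i : ℤ)) = 1) :
    ((L : ℂ) ^ n)⁻¹ *
      ∑ s : Fin n → Fin L,
        e2pi (((MvPolynomial.eval (fun i => ((s i : ℕ) : ℤ)) P : ℤ) : ℝ) * (a : ℝ) / (q : ℝ)
          + ∑ i, ((s i : ℕ) : ℝ) * ((av i : ℤ) : ℝ) / ((qv i : ℕ) : ℝ)) = 0 :=
  stmt6_general n P q qv L hL a av hndvd hav
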